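/- arXiv:1903.05847 — 4 statements merged into one kernel-verified Lean document; each statement's English description precedes it below -/
import Mathlib

section
/- Let b ∈ ℚⁿ, a ∈ ℤⁿ nonzero with gcd 1, fix an index j with aⱼ ≠ 0, and for each i with aᵢ ≠ 0 set cᵢ = ⌈bᵢ⌉ − bᵢ and eᵢ = aᵢcⱼ − aⱼcᵢ. If the ray {b + t·a : t ≥ 0} contains an integral point, then each eᵢ (for i with aᵢ ≠ 0, i ≠ j) is an integer. -/
/-- With `cᵢ = ⌈bᵢ⌉ − bᵢ` and `eᵢ = aᵢcⱼ − aⱼcᵢ`: if the ray `{b + t·a : t ≥ 0}` contains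
an integral point, then each `eᵢ` (for `i` with `aᵢ ≠ 0`, `i ≠ j`) is an integer. -/
theorem e_integer_of_ray_integral_point (n : ℕ) (b : Fin n → ℚ) (a : Fin n → ℤ)
    (ha : a ≠ 0) (hgcd : Finset.univ.gcd a = 1) (j : Fin n) (haj : a j ≠ 0)
    (h : ∃ t : ℝ, 0 ≤ t ∧ ∃ z : Fin n → ℤ, ∀ i, (b i : ℝ) + t * (a i : ℝ) = (z i : ℝ)) :
    ∀ i, a i ≠ 0 → i ≠ j →
      ∃ k : ℤ, (a i : ℚ) * ((⌈b j⌉ : ℚ) - b j) - (a j : ℚ) * ((⌈b i⌉ : ℚ) - b i) = (k : ℚ) := by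
  intro i hai hij
  obtain ⟨t, -, z, hz⟩ := h
  refine ⟨a i * ⌈b j⌉ - a j * ⌈b i⌉ - (a i * z j - a j * z i), ?_⟩
  have key : (a i : ℝ) * (b j : ℝ) - (a j : ℝ) * (b i : ℝ)
      = (a i : ℝ) * (z j : ℝ) - (a j : ℝ) * (z i : ℝ) := by
    linear_combination (a i : ℝ) * hz j - (a j : ℝ) * hz i
  have : ((a i : ℚ) * b j - (a j : ℚ) * b i : ℚ) = ((a i * z j - a j * z i : ℤ) : ℚ) := by
    apply Rat.cast_injective (α := ℝ)
    push_cast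
    linarith [key]
  push_cast
  push_cast at this
  linear_combination -this
end

section
/- Let b ∈ ℚⁿ and a ∈ ℤⁿ with all coordinates aᵢ nonzero and gcd(a₁,…,aₙ) = 1. Set cᵢ = ⌈bᵢ⌉ − bᵢ, eᵢ = aᵢc₁ − a₁cᵢ for i ≥ 2. Then the ray {b + t·a : t ≥ 0} contains an integral point if and only if each eᵢ is an integer and there exists an integer t₁ ≥ 0 with eᵢ + aᵢt₁ ≡ 0 (mod a₁) for all i = 2,…,n. -/
/-- With all `aᵢ ≠ 0`, `gcd(a) = 1`, `cᵢ = ⌈bᵢ⌉ − bᵢ` and `eᵢ = aᵢc₀ − a₀cᵢ` (index `0`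
playing the role of the first coordinate): the ray `{b + t·a : t ≥ 0}` contains an integral
point iff each `eᵢ` is an integer and there is an integer `t₁ ≥ 0` with
`eᵢ + aᵢt₁ ≡ 0 (mod a₀)` for all `i ≠ 0`. -/
theorem ray_integral_point_iff (n : ℕ) (b : Fin (n + 1) → ℚ) (a : Fin (n + 1) → ℤ)
    (ha : ∀ i, a i ≠ 0) (hgcd : Finset.univ.gcd a = 1) :
    (∃ t : ℝ, 0 ≤ t ∧ ∃ z : Fin (n + 1) → ℤ, ∀ i, (b i : ℝ) + t * (a i : ℝ) = (z i : ℝ)) ↔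
      ∃ E : Fin (n + 1) → ℤ,
        (∀ i, (E i : ℚ) =
          (a i : ℚ) * ((⌈b 0⌉ : ℚ) - b 0) - (a 0 : ℚ) * ((⌈b i⌉ : ℚ) - b i)) ∧
        ∃ t₁ : ℤ, 0 ≤ t₁ ∧ ∀ i, i ≠ 0 → a 0 ∣ (E i + a i * t₁) := by
  have ha0 : (a 0 : ℚ) ≠ 0 := Int.cast_ne_zero.mpr (ha 0)
  have ha0R : (a 0 : ℝ) ≠ 0 := Int.cast_ne_zero.mpr (ha 0)
  constructor
  · rintro ⟨t, ht0, z, hz⟩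
    set q : ℚ := ((z 0 : ℚ) - b 0) / (a 0 : ℚ) with hqdef
    have htq : t = (q : ℝ) := by
      have h0 := hz 0
      rw [hqdef]
      push_cast
      field_simp
      linarith
    have hrat : ∀ i, (b i : ℚ) + q * (a i : ℚ) = (z i : ℚ) := by
      intro i
      have hi := hz i
      rw [htq] at hi
      exact_mod_cast hi
    refine ⟨fun i => a i * ⌈b 0⌉ - a 0 * ⌈b i⌉ - (a i * z 0 - a 0 * z i), ?_, ?_⟩
    · intro i
      have hiq := hrat i
      have h0q := hrat 0
      push_cast
      linear_combination (a i : ℚ) * h0q - (a 0 : ℚ) * hiq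
    · set k : ℤ := z 0 - ⌈b 0⌉ with hkdef
      set t₁ : ℤ := k + (k.natAbs : ℤ) * ((a 0).natAbs : ℤ) with ht1def
      have hna : (1 : ℤ) ≤ ((a 0).natAbs : ℤ) := by
        have := Int.natAbs_pos.mpr (ha 0); exact_mod_cast this
      have hka : -k ≤ (k.natAbs : ℤ) := by
        rcases le_or_gt 0 k with h | h
        · omega
        · omega
      refine ⟨t₁, ?_, ?_⟩
      · have h2 : (0:ℤ) ≤ (k.natAbs : ℤ) := Int.ofNat_nonneg _
        nlinarith
      · intro i _
        have hdvd1 : a 0 ∣ (a i * ⌈b 0⌉ - a 0 * ⌈b i⌉ - (a i * z 0 - a 0 * z i)) + a i * k := by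
          exact ⟨z i - ⌈b i⌉, by rw [hkdef]; ring⟩
        have hdvd2 : a 0 ∣ ((a 0).natAbs : ℤ) := Int.dvd_natAbs.mpr dvd_rfl
        have : (a i * ⌈b 0⌉ - a 0 * ⌈b i⌉ - (a i * z 0 - a 0 * z i)) + a i * t₁
            = ((a i * ⌈b 0⌉ - a 0 * ⌈b i⌉ - (a i * z 0 - a 0 * z i)) + a i * k)
              + (a i * (k.natAbs : ℤ)) * ((a 0).natAbs : ℤ) := by rw [ht1def]; ring
        rw [this]
        exact dvd_add hdvd1 (Dvd.dvd.mul_left hdvd2 _)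
  · rintro ⟨E, hE, t₁, ht₁, hdvd⟩
    have hE0 : E 0 = 0 := by
      have h : (E 0 : ℚ) = 0 := by rw [hE 0]; ring
      exact_mod_cast h
    set c0 : ℚ := (⌈b 0⌉ : ℚ) - b 0 with hc0def
    have hc0 : 0 ≤ c0 := by
      have := Int.le_ceil (b 0); rw [hc0def]; linarith
    have hc0' : c0 < 1 := by
      have := Int.ceil_lt_add_one (b 0); rw [hc0def]; linarith
    set k : ℤ := if 0 < a 0 then t₁ else t₁ - (t₁ + 1) * ((a 0).natAbs : ℤ) with hkdef
    have hdvd2 : a 0 ∣ ((a 0).natAbs : ℤ) := Int.dvd_natAbs.mpr dvd_rfl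
    have hkdvd : ∀ i, a 0 ∣ E i + a i * k := by
      intro i
      by_cases hi : i = 0
      · subst hi; rw [hE0]; simpa using Dvd.intro k rfl
      · have h1 := hdvd i hi
        rw [hkdef]
        split
        · exact h1
        · have : E i + a i * (t₁ - (t₁ + 1) * ((a 0).natAbs : ℤ))
              = (E i + a i * t₁) - (a i * (t₁ + 1)) * ((a 0).natAbs : ℤ) := by ring
          rw [this]
          exact dvd_sub h1 (Dvd.dvd.mul_left hdvd2 _)
    set q : ℚ := (c0 + (k : ℚ)) / (a 0 : ℚ) with hqdef
    have hq0 : 0 ≤ q := by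
      rw [hqdef, hkdef]
      split
      · rename_i h
        apply div_nonneg
        · have : (0:ℚ) ≤ (t₁ : ℚ) := by exact_mod_cast ht₁
          linarith
        · exact_mod_cast h.le
      · rename_i h
        have ha0neg : a 0 < 0 := lt_of_le_of_ne (not_lt.mp h) (ha 0)
        have hna : (1 : ℤ) ≤ ((a 0).natAbs : ℤ) := by
          have := Int.natAbs_pos.mpr (ha 0); exact_mod_cast this
        have hkle : t₁ - (t₁ + 1) * ((a 0).natAbs : ℤ) ≤ -1 := by nlinarith
        have hkleQ : ((t₁ - (t₁ + 1) * ((a 0).natAbs : ℤ) : ℤ) : ℚ) ≤ -1 := by exact_mod_cast hkle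
        have hnum : c0 + ((t₁ - (t₁ + 1) * ((a 0).natAbs : ℤ) : ℤ) : ℚ) ≤ 0 := by linarith
        have hden : (a 0 : ℚ) ≤ 0 := by exact_mod_cast ha0neg.le
        exact div_nonneg_iff.mpr (Or.inr ⟨hnum, hden⟩)
    refine ⟨(q : ℝ), by exact_mod_cast hq0, fun i => ⌈b i⌉ + (E i + a i * k) / a 0, fun i => ?_⟩
    show (b i : ℝ) + (q:ℝ) * (a i : ℝ) = ((⌈b i⌉ + (E i + a i * k) / a 0 : ℤ) : ℝ)
    obtain ⟨d, hd⟩ := hkdvd i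
    have hdiv : (E i + a i * k) / a 0 = d := by
      rw [hd]; exact Int.mul_ediv_cancel_left d (ha 0)
    rw [hdiv]
    have hdQ : (E i : ℚ) + (a i : ℚ) * (k : ℚ) = (a 0 : ℚ) * (d : ℚ) := by exact_mod_cast hd
    have hgoalQ : (b i : ℚ) + q * (a i : ℚ) = ((⌈b i⌉ + d : ℤ) : ℚ) := by
      rw [hqdef]
      have hEi := hE i
      push_cast
      field_simp
      linear_combination hdQ - hEi
    push_cast
    exact_mod_cast hgoalQ
end

section
/- Let b ∈ ℚⁿ and a ∈ ℤⁿ with all aᵢ ≠ 0 and gcd(a) = 1. Suppose there is an index i₀ such that for all j ≠ i₀ the residue of aⱼ is invertible modulo a_{i₀}. Set cᵢ = ⌈bᵢ⌉ − bᵢ and e_{ij} = aᵢcⱼ − aⱼcᵢ. Then the ray {b + t·a : t ≥ 0} contains an integral point if and only if e_{ij} is an integer for all i < j. -/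
/-- Key lemma (backward direction, over ℚ): if all the `e_{ij}` are integers, then there is a
nonnegative rational `t` with `b i + t * a i` an integer for every `i`. -/
lemma ray_key (n : ℕ) (b : Fin n → ℚ) (a : Fin n → ℤ) (ha : ∀ i, a i ≠ 0)
    (i₀ : Fin n) (hinv : ∀ j, j ≠ i₀ → IsUnit ((a j : ZMod (a i₀).natAbs)))
    (h : ∀ i j : Fin n,
        ∃ k : ℤ, (a i : ℚ) * ((⌈b j⌉ : ℚ) - b j) - (a j : ℚ) * ((⌈b i⌉ : ℚ) - b i) = (k : ℚ)) :
    ∃ t : ℚ, 0 ≤ t ∧ ∀ i, ∃ z : ℤ, b i + t * a i = z := by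
  set c : Fin n → ℚ := fun i => (⌈b i⌉ : ℚ) - b i with hcdef
  have hai₀ : (a i₀ : ℚ) ≠ 0 := by exact_mod_cast ha i₀
  set m := (a i₀).natAbs with hm
  choose E hE using fun j => h i₀ j
  -- key claim
  have claim : ∀ j k : Fin n, (a i₀ : ℤ) ∣ a k * E j - a j * E k := by
    intro j k
    obtain ⟨F, hF⟩ := h k j
    refine ⟨F, ?_⟩
    have hq : ((a k * E j - a j * E k : ℤ) : ℚ) = ((a i₀ * F : ℤ) : ℚ) := by
      push_cast
      linear_combination (a j : ℚ) * hE k - (a k : ℚ) * hE j + (a i₀ : ℚ) * hF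
    exact_mod_cast hq
  -- common solution s in ZMod m
  obtain ⟨s, hs⟩ : ∃ s : ZMod m, ∀ j, j ≠ i₀ → (a j : ZMod m) * s = (E j : ZMod m) := by
    by_cases hex : ∃ j : Fin n, j ≠ i₀
    · obtain ⟨j₁, hj₁⟩ := hex
      refine ⟨((hinv j₁ hj₁).unit⁻¹ : (ZMod m)ˣ) * (E j₁ : ZMod m), ?_⟩
      intro j hj
      have hd := claim j₁ j
      have h0 : ((a j * E j₁ - a j₁ * E j : ℤ) : ZMod m) = 0 := by
        rw [ZMod.intCast_zmod_eq_zero_iff_dvd]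
        exact Int.natAbs_dvd.mpr hd
      push_cast at h0
      have heq : (a j : ZMod m) * (E j₁ : ZMod m) = (a j₁ : ZMod m) * (E j : ZMod m) := by
        linear_combination h0
      calc (a j : ZMod m) * (((hinv j₁ hj₁).unit⁻¹ : (ZMod m)ˣ) * (E j₁ : ZMod m))
          = ((hinv j₁ hj₁).unit⁻¹ : (ZMod m)ˣ) * ((a j : ZMod m) * (E j₁ : ZMod m)) := by ring
        _ = ((hinv j₁ hj₁).unit⁻¹ : (ZMod m)ˣ) * ((a j₁ : ZMod m) * (E j : ZMod m)) := by
              rw [heq]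
        _ = (((hinv j₁ hj₁).unit⁻¹ : (ZMod m)ˣ) * (a j₁ : ZMod m)) * (E j : ZMod m) := by ring
        _ = (E j : ZMod m) := by
              rw [(hinv j₁ hj₁).val_inv_mul, one_mul]
    · refine ⟨0, fun j hj => absurd ⟨j, hj⟩ hex⟩
  set S : ℤ := (s.cast : ℤ) with hSdef
  have hS : ((S : ℤ) : ZMod m) = s := ZMod.intCast_zmod_cast s
  -- divisibility facts
  have hdvd : ∀ j, j ≠ i₀ → (a i₀ : ℤ) ∣ a j * S - E j := by
    intro j hj
    rw [← Int.natAbs_dvd, ← hm, ← ZMod.intCast_zmod_eq_zero_iff_dvd]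
    push_cast
    rw [hS, hs j hj]
    ring
  -- the candidate t₀
  set t₀ : ℚ := (c i₀ + S) / a i₀ with ht₀
  have hint : ∀ i, ∃ z : ℤ, b i + t₀ * a i = z := by
    intro i
    by_cases hi : i = i₀
    · subst hi
      refine ⟨⌈b i⌉ + S, ?_⟩
      have : t₀ * a i = c i + S := by
        rw [ht₀, div_mul_cancel₀ _ hai₀]
      rw [this]
      simp [hcdef]
      push_cast
      ring
    · obtain ⟨q, hq⟩ := (hdvd i hi)
      have hq' : (a i : ℚ) * S - E i = (a i₀ : ℚ) * q := by exact_mod_cast hq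
      refine ⟨⌈b i⌉ + q, ?_⟩
      have hEi := hE i
      apply mul_left_cancel₀ hai₀
      have ht : t₀ * a i₀ = c i₀ + S := by rw [ht₀, div_mul_cancel₀ _ hai₀]
      push_cast
      linear_combination (a i : ℚ) * ht - hEi + hq' + (a i : ℚ) * (by simp [hcdef] : c i₀ = (⌈b i₀⌉ : ℚ) - b i₀)
  -- shift to make t nonnegative
  set K : ℤ := max 0 ⌈-t₀⌉ with hK
  refine ⟨t₀ + K, ?_, ?_⟩
  · have h1 : (⌈-t₀⌉ : ℚ) ≥ -t₀ := Int.le_ceil _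
    have h2 : (K : ℚ) ≥ (⌈-t₀⌉ : ℚ) := by exact_mod_cast le_max_right 0 ⌈-t₀⌉
    linarith
  · intro i
    obtain ⟨z, hz⟩ := hint i
    refine ⟨z + K * a i, ?_⟩
    push_cast
    linear_combination hz

/-- Suppose all `aᵢ ≠ 0`, `gcd(a) = 1`, and there is an index `i₀` such that `aⱼ` is
invertible modulo `a_{i₀}` for all `j ≠ i₀`.  With `cᵢ = ⌈bᵢ⌉ − bᵢ` and
`e_{ij} = aᵢcⱼ − aⱼcᵢ`, the ray `{b + t·a : t ≥ 0}` contains an integral point iff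
`e_{ij}` is an integer for all `i < j`. -/
theorem ray_integral_point_iff_e_integer (n : ℕ) (b : Fin n → ℚ) (a : Fin n → ℤ)
    (ha : ∀ i, a i ≠ 0) (hgcd : Finset.univ.gcd a = 1)
    (i₀ : Fin n) (hinv : ∀ j, j ≠ i₀ → IsUnit ((a j : ZMod (a i₀).natAbs))) :
    (∃ t : ℝ, 0 ≤ t ∧ ∃ z : Fin n → ℤ, ∀ i, (b i : ℝ) + t * (a i : ℝ) = (z i : ℝ)) ↔
      ∀ i j : Fin n, i < j →
        ∃ k : ℤ, (a i : ℚ) * ((⌈b j⌉ : ℚ) - b j) - (a j : ℚ) * ((⌈b i⌉ : ℚ) - b i) = (k : ℚ) := by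
  constructor
  · rintro ⟨t, ht, z, hz⟩ i j hij
    have hreal : (a i : ℝ) * (b j : ℚ) - (a j : ℝ) * (b i : ℚ) =
        (a i : ℝ) * (z j : ℤ) - (a j : ℝ) * (z i : ℤ) := by
      linear_combination (a i : ℝ) * hz j - (a j : ℝ) * hz i
    have hrat : (a i : ℚ) * b j - (a j : ℚ) * b i = (a i : ℚ) * z j - (a j : ℚ) * z i := by
      exact_mod_cast hreal
    refine ⟨a i * ⌈b j⌉ - a j * ⌈b i⌉ - (a i * z j - a j * z i), ?_⟩
    push_cast
    linear_combination -hrat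
  · intro h
    have h' : ∀ i j : Fin n,
        ∃ k : ℤ, (a i : ℚ) * ((⌈b j⌉ : ℚ) - b j) - (a j : ℚ) * ((⌈b i⌉ : ℚ) - b i) = (k : ℚ) := by
      intro i j
      rcases lt_trichotomy i j with hij | rfl | hij
      · exact h i j hij
      · exact ⟨0, by push_cast; ring⟩
      · obtain ⟨k, hk⟩ := h j i hij
        exact ⟨-k, by push_cast; linarith⟩
    obtain ⟨t, ht, hz⟩ := ray_key n b a ha i₀ hinv h'
    choose z hz' using hz
    refine ⟨(t : ℝ), by exact_mod_cast ht, z, fun i => ?_⟩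
    exact_mod_cast hz' i
end

section
/- Let P₁, P₂ be finite posets on disjoint sets, and let P₁ ⊕ \bar{P₂} denote the ordinal sum of P₁ with P₂-with-an-added-minimum. Then the map sending generators appropriately gives a K-algebra isomorphism K[P₁ ⊕ \bar{P₂}] ≅ K[P₁] ⊗_K K[P₂]. -/
set_option linter.unusedSectionVars false

open MvPolynomial

-- (defs from /tmp/a.lean assumed; paste for testing)
noncomputable def hibiCone (P : Type*) [PartialOrder P] : AddSubmonoid (Option P →₀ ℕ) where
  carrier := {f | (∀ v : P, f (some v) ≤ f none) ∧
    ∀ u v : P, u ≤ v → f (some v) ≤ f (some u)}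
  zero_mem' := by simp
  add_mem' := by
    rintro f g ⟨h1, h2⟩ ⟨h3, h4⟩
    refine ⟨fun v => ?_, fun u v huv => ?_⟩ <;> simp only [Finsupp.add_apply]
    · exact Nat.add_le_add (h1 v) (h3 v)
    · exact Nat.add_le_add (h2 u v huv) (h4 u v huv)

noncomputable def idealVec {P : Type*} (I : Finset P) : Option P →₀ ℕ :=
  Finsupp.single none 1 + ∑ v ∈ I, Finsupp.single (some v) 1

lemma idealVec_none {P : Type*} (I : Finset P) : idealVec I none = 1 := by
  simp [idealVec, Finsupp.single_apply]

open scoped Classical in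
lemma idealVec_some {P : Type*} (I : Finset P) (u : P) :
    idealVec I (some u) = if u ∈ I then 1 else 0 := by
  classical
  simp [idealVec, Finsupp.single_apply, Finsupp.finset_sum_apply]

open scoped Classical in
lemma idealVec_mem {P : Type*} [PartialOrder P] {I : Finset P}
    (hI : ∀ v ∈ I, ∀ u, u ≤ v → u ∈ I) : idealVec I ∈ hibiCone P := by
  constructor
  · intro v
    rw [idealVec_none, idealVec_some]
    split <;> omega
  · intro u v huv
    rw [idealVec_some, idealVec_some]
    by_cases hv : v ∈ I
    · simp [hv, hI v hv u huv]
    · simp [hv]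

def hibiGens (K : Type*) [Field K] (P : Type*) [PartialOrder P] [Fintype P] :
    Set (MvPolynomial (Option P) K) :=
  {m | ∃ I : Finset P, (∀ v ∈ I, ∀ u, u ≤ v → u ∈ I) ∧
    m = X none * ∏ v ∈ I, X (some v)}

noncomputable def HibiRing (K : Type*) [Field K] (P : Type*) [PartialOrder P] [Fintype P] :
    Subalgebra K (MvPolynomial (Option P) K) :=
  Algebra.adjoin K (hibiGens K P)

lemma gen_eq_monomial (K : Type*) [Field K] {P : Type*} (I : Finset P) :
    (X none * ∏ v ∈ I, X (some v) : MvPolynomial (Option P) K) = monomial (idealVec I) 1 := by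
  have h1 : (∏ v ∈ I, X (some v) : MvPolynomial (Option P) K)
      = monomial (∑ v ∈ I, Finsupp.single (some v) 1) 1 := by
    rw [monomial_sum_one]
    exact Finset.prod_congr rfl fun v _ => rfl
  rw [h1, X, monomial_mul, one_mul, idealVec]

lemma monomial_mem_aux (K : Type*) [Field K] (P : Type*) [PartialOrder P] [Fintype P]
    (n : ℕ) : ∀ f ∈ hibiCone P, f none ≤ n → (monomial f (1:K)) ∈ HibiRing K P := by
  classical
  induction n with
  | zero =>
    intro f hf h0
    have : f = 0 := by
      ext o
      cases o with
      | none => simpa using h0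
      | some v => simpa using le_trans (hf.1 v) h0
    rw [this, monomial_zero', map_one]
    exact one_mem _
  | succ n ih =>
    intro f hf h
    by_cases h1 : f none = 0
    · have : f = 0 := by
        ext o
        cases o with
        | none => simpa using h1
        | some v => simpa using le_trans (hf.1 v) (le_of_eq h1)
      rw [this, monomial_zero', map_one]
      exact one_mem _
    · set I : Finset P := Finset.univ.filter (fun v => 1 ≤ f (some v)) with hIdef
      have hmemI : ∀ v, v ∈ I ↔ 1 ≤ f (some v) := by
        intro v; simp [hIdef]
      have hIdeal : ∀ v ∈ I, ∀ u, u ≤ v → u ∈ I := by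
        intro v hv u huv
        rw [hmemI] at hv ⊢
        exact le_trans hv (hf.2 u v huv)
      have hle : ∀ o, idealVec I o ≤ f o := by
        intro o
        cases o with
        | none => rw [idealVec_none]; omega
        | some v =>
          rw [idealVec_some]
          split
          · rwa [← hmemI]
          · omega
      have hg : f - idealVec I ∈ hibiCone P := by
        constructor
        · intro v
          rw [Finsupp.tsub_apply, Finsupp.tsub_apply, idealVec_none, idealVec_some]
          have h1v := hf.1 v
          simp only [hmemI]
          split_ifs <;> omega
        · intro u v huv
          rw [Finsupp.tsub_apply, Finsupp.tsub_apply, idealVec_some, idealVec_some]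
          have h0 := hf.2 u v huv
          simp only [hmemI]
          split_ifs <;> omega
      have hsum : f = (f - idealVec I) + idealVec I := by
        ext o
        rw [Finsupp.add_apply, Finsupp.tsub_apply]
        have := hle o
        omega
      have hgnone : (f - idealVec I) none ≤ n := by
        rw [Finsupp.tsub_apply, idealVec_none]
        omega
      have heq : (monomial f (1:K)) = monomial (f - idealVec I) 1 * monomial (idealVec I) 1 := by
        rw [monomial_mul, one_mul, ← hsum]
      rw [heq]
      exact mul_mem (ih _ hg hgnone)
        (Algebra.subset_adjoin ⟨I, hIdeal, (gen_eq_monomial K I).symm⟩)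

lemma monomial_mem (K : Type*) [Field K] (P : Type*) [PartialOrder P] [Fintype P]
    {f : Option P →₀ ℕ} (hf : f ∈ hibiCone P) : (monomial f (1:K)) ∈ HibiRing K P :=
  monomial_mem_aux K P (f none) f hf le_rfl

noncomputable def hibiHom (K : Type*) [Field K] (P : Type*) [PartialOrder P] :
    AddMonoidAlgebra K (hibiCone P) →ₐ[K] MvPolynomial (Option P) K :=
  AddMonoidAlgebra.mapDomainAlgHom K K (hibiCone P).subtype

lemma hibiHom_single (K : Type*) [Field K] (P : Type*) [PartialOrder P]
    (s : hibiCone P) (k : K) :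
    hibiHom K P (AddMonoidAlgebra.single s k) = MvPolynomial.monomial (s : Option P →₀ ℕ) k := by
  rw [← single_eq_monomial]
  simp only [hibiHom, AddMonoidAlgebra.mapDomainAlgHom_apply]
  exact AddMonoidAlgebra.mapDomain_single

lemma hibiHom_injective (K : Type*) [Field K] (P : Type*) [PartialOrder P] :
    Function.Injective (hibiHom K P) :=
  AddMonoidAlgebra.mapDomain_injective Subtype.coe_injective

lemma hibiHom_range (K : Type*) [Field K] (P : Type*) [PartialOrder P] [Fintype P] :
    (hibiHom K P).range = HibiRing K P := by
  apply le_antisymm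
  · rintro _ ⟨x, rfl⟩
    simp only [AlgHom.toRingHom_eq_coe, RingHom.coe_coe]
    induction x using AddMonoidAlgebra.induction with
    | zero => rw [map_zero]; exact zero_mem _
    | single_add a b f haf hb ih =>
      rw [map_add]
      refine add_mem ?_ ih
      rw [hibiHom_single]
      have : (monomial (a : Option P →₀ ℕ) b) = b • monomial (a : Option P →₀ ℕ) (1:K) := by
        rw [smul_monomial, smul_eq_mul, mul_one]
      rw [this]
      exact Subalgebra.smul_mem _ (monomial_mem K P a.2) b
  · rw [HibiRing, Algebra.adjoin_le_iff]
    rintro m ⟨I, hI, rfl⟩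
    refine ⟨AddMonoidAlgebra.single ⟨idealVec I, idealVec_mem hI⟩ 1, ?_⟩
    simp only [AlgHom.toRingHom_eq_coe, RingHom.coe_coe]
    rw [hibiHom_single]
    exact (gen_eq_monomial K I).symm

noncomputable def hibiEquiv (K : Type*) [Field K] (P : Type*) [PartialOrder P] [Fintype P] :
    AddMonoidAlgebra K (hibiCone P) ≃ₐ[K] HibiRing K P :=
  (AlgEquiv.ofInjective (hibiHom K P) (hibiHom_injective K P)).trans
    (Subalgebra.equivOfEq _ _ (hibiHom_range K P))

section AMA

variable (K : Type*) [Field K] (M N : Type*) [AddCommMonoid M] [AddCommMonoid N]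

noncomputable def amaF : AddMonoidAlgebra K (M × N) →ₐ[K]
    TensorProduct K (AddMonoidAlgebra K M) (AddMonoidAlgebra K N) :=
  AddMonoidAlgebra.lift K _ (M × N)
    { toFun := fun p => AddMonoidAlgebra.single (Multiplicative.toAdd p).1 (1:K) ⊗ₜ[K]
        AddMonoidAlgebra.single (Multiplicative.toAdd p).2 (1:K)
      map_one' := by
        simp only [Algebra.TensorProduct.one_def]
        rfl
      map_mul' := fun p q => by
        simp only [Algebra.TensorProduct.tmul_mul_tmul]
        rw [AddMonoidAlgebra.single_mul_single, AddMonoidAlgebra.single_mul_single, one_mul]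
        rfl }

noncomputable def amaG : TensorProduct K (AddMonoidAlgebra K M) (AddMonoidAlgebra K N) →ₐ[K]
    AddMonoidAlgebra K (M × N) :=
  Algebra.TensorProduct.productMap
    (AddMonoidAlgebra.mapDomainAlgHom K K (AddMonoidHom.inl M N))
    (AddMonoidAlgebra.mapDomainAlgHom K K (AddMonoidHom.inr M N))

lemma amaF_single (p : M × N) (k : K) :
    amaF K M N (AddMonoidAlgebra.single p k) = (AddMonoidAlgebra.single p.1 k) ⊗ₜ[K] (AddMonoidAlgebra.single p.2 (1:K)) := by
  show AddMonoidAlgebra.lift K _ (M × N) _ (AddMonoidAlgebra.single p k) = _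
  rw [AddMonoidAlgebra.lift_single]
  simp only [MonoidHom.coe_mk, OneHom.coe_mk]
  rw [TensorProduct.smul_tmul', AddMonoidAlgebra.smul_single, smul_eq_mul, mul_one]
  rfl

noncomputable def amaProdEquiv : AddMonoidAlgebra K (M × N) ≃ₐ[K]
    TensorProduct K (AddMonoidAlgebra K M) (AddMonoidAlgebra K N) := by
  refine AlgEquiv.ofAlgHom (amaF K M N) (amaG K M N) ?_ ?_
  · apply Algebra.TensorProduct.ext
    · apply AddMonoidAlgebra.algHom_ext
      intro m
      simp only [AlgHom.coe_comp, Function.comp_apply, Algebra.TensorProduct.includeLeft_apply,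
        AlgHom.coe_id, id_eq]
      rw [show amaG K M N ((AddMonoidAlgebra.single m (1:K)) ⊗ₜ[K] (1 : AddMonoidAlgebra K N))
          = AddMonoidAlgebra.single ((m, 0) : M × N) (1:K) by
        rw [amaG, Algebra.TensorProduct.productMap_apply_tmul, map_one, mul_one,
          AddMonoidAlgebra.mapDomainAlgHom_apply, AddMonoidAlgebra.mapDomain_single]; rfl]
      rw [amaF_single]
      rfl
      exact Subsingleton.elim _ _
    · apply AddMonoidAlgebra.algHom_ext
      intro n
      simp only [AlgHom.coe_comp, AlgHom.coe_restrictScalars', Function.comp_apply,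
        Algebra.TensorProduct.includeRight_apply, AlgHom.coe_id, id_eq]
      rw [show amaG K M N ((1 : AddMonoidAlgebra K M) ⊗ₜ[K] (AddMonoidAlgebra.single n (1:K)))
          = AddMonoidAlgebra.single ((0, n) : M × N) (1:K) by
        rw [amaG, Algebra.TensorProduct.productMap_apply_tmul, map_one, one_mul,
          AddMonoidAlgebra.mapDomainAlgHom_apply, AddMonoidAlgebra.mapDomain_single]; rfl]
      rw [amaF_single]
      rfl
      exact Subsingleton.elim _ _
  · apply AddMonoidAlgebra.algHom_ext
    intro p
    simp only [AlgHom.coe_comp, Function.comp_apply, AlgHom.coe_id, id_eq]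
    rw [amaF_single]
    rw [amaG, Algebra.TensorProduct.productMap_apply_tmul,
      AddMonoidAlgebra.mapDomainAlgHom_apply, AddMonoidAlgebra.mapDomainAlgHom_apply,
      AddMonoidAlgebra.mapDomain_single, AddMonoidAlgebra.mapDomain_single, AddMonoidAlgebra.single_mul_single]
    simp [Prod.ext_iff]
    exact Subsingleton.elim _ _

end AMA

instance withBotFintype (α : Type*) [Fintype α] : Fintype (WithBot α) :=
  inferInstanceAs (Fintype (Option α))

section ConeSplit

variable {P₁ P₂ : Type*} [PartialOrder P₁] [Fintype P₁] [PartialOrder P₂] [Fintype P₂]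

/-- bottom element of `WithBot P₂` inside the lex sum. -/
noncomputable abbrev qbot : P₁ ⊕ₗ WithBot P₂ := toLex (Sum.inr ⊥)

noncomputable def splitFun₁ (f : Option (P₁ ⊕ₗ WithBot P₂) →₀ ℕ) : Option P₁ →₀ ℕ :=
  Finsupp.equivFunOnFinite.symm fun o =>
    Option.rec (f none - f (some qbot))
      (fun v => f (some (toLex (Sum.inl v))) - f (some qbot)) o

noncomputable def splitFun₂ (f : Option (P₁ ⊕ₗ WithBot P₂) →₀ ℕ) : Option P₂ →₀ ℕ :=
  Finsupp.equivFunOnFinite.symm fun o =>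
    Option.rec (f (some qbot))
      (fun w => f (some (toLex (Sum.inr (w : WithBot P₂))))) o

noncomputable def joinFun (g₁ : Option P₁ →₀ ℕ) (g₂ : Option P₂ →₀ ℕ) :
    Option (P₁ ⊕ₗ WithBot P₂) →₀ ℕ :=
  Finsupp.equivFunOnFinite.symm fun o =>
    Option.rec (g₁ none + g₂ none)
      (fun q => Sum.rec (fun v => g₁ (some v) + g₂ none)
        (fun b => WithBot.recBotCoe (g₂ none) (fun w => g₂ (some w)) b) (ofLex q)) o

@[simp] lemma splitFun₁_none (f) : splitFun₁ (P₁ := P₁) (P₂ := P₂) f none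
    = f none - f (some qbot) := by simp [splitFun₁]
@[simp] lemma splitFun₁_some (f) (v : P₁) : splitFun₁ (P₂ := P₂) f (some v)
    = f (some (toLex (Sum.inl v))) - f (some qbot) := by simp [splitFun₁]
@[simp] lemma splitFun₂_none (f) : splitFun₂ (P₁ := P₁) (P₂ := P₂) f none
    = f (some qbot) := by simp [splitFun₂]
@[simp] lemma splitFun₂_some (f) (w : P₂) : splitFun₂ (P₁ := P₁) f (some w)
    = f (some (toLex (Sum.inr (w : WithBot P₂)))) := by simp [splitFun₂]
@[simp] lemma joinFun_none (g₁ g₂) : joinFun (P₁ := P₁) (P₂ := P₂) g₁ g₂ none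
    = g₁ none + g₂ none := by simp [joinFun]
@[simp] lemma joinFun_inl (g₁ g₂) (v : P₁) :
    joinFun (P₁ := P₁) (P₂ := P₂) g₁ g₂ (some (toLex (Sum.inl v)))
    = g₁ (some v) + g₂ none := by simp [joinFun]
@[simp] lemma joinFun_bot (g₁ g₂) :
    joinFun (P₁ := P₁) (P₂ := P₂) g₁ g₂ (some qbot) = g₂ none := by simp [joinFun]
@[simp] lemma joinFun_inr (g₁ g₂) (w : P₂) :
    joinFun (P₁ := P₁) (P₂ := P₂) g₁ g₂ (some (toLex (Sum.inr (w : WithBot P₂))))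
    = g₂ (some w) := by simp [joinFun]

lemma bot_le_inl (f : Option (P₁ ⊕ₗ WithBot P₂) →₀ ℕ)
    (hf : f ∈ hibiCone (P₁ ⊕ₗ WithBot P₂)) (v : P₁) :
    f (some qbot) ≤ f (some (toLex (Sum.inl v))) :=
  hf.2 _ _ (Sum.Lex.inl_le_inr v ⊥)

lemma inr_le_bot (f : Option (P₁ ⊕ₗ WithBot P₂) →₀ ℕ)
    (hf : f ∈ hibiCone (P₁ ⊕ₗ WithBot P₂)) (w : P₂) :
    f (some (toLex (Sum.inr (w : WithBot P₂)))) ≤ f (some qbot) :=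
  hf.2 _ _ (Sum.Lex.inr_le_inr_iff.mpr bot_le)

lemma splitFun₁_mem (f) (hf : f ∈ hibiCone (P₁ ⊕ₗ WithBot P₂)) :
    splitFun₁ f ∈ hibiCone P₁ := by
  constructor
  · intro v
    rw [splitFun₁_some, splitFun₁_none]
    exact Nat.sub_le_sub_right (hf.1 _) _
  · intro u v huv
    rw [splitFun₁_some, splitFun₁_some]
    exact Nat.sub_le_sub_right (hf.2 _ _ (Sum.Lex.inl_le_inl_iff.mpr huv)) _

lemma splitFun₂_mem (f) (hf : f ∈ hibiCone (P₁ ⊕ₗ WithBot P₂)) :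
    splitFun₂ f ∈ hibiCone P₂ := by
  constructor
  · intro w
    rw [splitFun₂_some, splitFun₂_none]
    exact inr_le_bot f hf w
  · intro u v huv
    rw [splitFun₂_some, splitFun₂_some]
    exact hf.2 _ _ (Sum.Lex.inr_le_inr_iff.mpr (WithBot.coe_le_coe.mpr huv))

lemma joinFun_mem (g₁ g₂) (h₁ : g₁ ∈ hibiCone P₁) (h₂ : g₂ ∈ hibiCone P₂) :
    joinFun g₁ g₂ ∈ hibiCone (P₁ ⊕ₗ WithBot P₂) := by
  constructor
  · intro q
    induction' hq : ofLex q with v b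
    · have : q = toLex (Sum.inl v) := by rw [← hq]; rfl
      rw [this, joinFun_inl, joinFun_none]
      exact Nat.add_le_add (h₁.1 v) le_rfl
    · have : q = toLex (Sum.inr b) := by rw [← hq]; rfl
      rw [this]
      induction' b with w
      · rw [joinFun_bot, joinFun_none]; omega
      · rw [joinFun_inr, joinFun_none]
        have := h₂.1 w; omega
  · intro u v huv
    obtain ⟨a, rfl⟩ : ∃ a, u = toLex a := ⟨ofLex u, rfl⟩
    obtain ⟨b, rfl⟩ : ∃ b, v = toLex b := ⟨ofLex v, rfl⟩
    have h := Sum.Lex.toLex_le_toLex.mp huv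
    cases h with
    | @inl a b hab =>
      show (joinFun g₁ g₂) (some (toLex (Sum.inl b))) ≤ (joinFun g₁ g₂) (some (toLex (Sum.inl a)))
      rw [joinFun_inl, joinFun_inl]
      exact Nat.add_le_add (h₁.2 a b hab) le_rfl
    | @inr a b hab =>
      induction' a with wa
      · induction' b with wb
        · exact le_rfl
        · show (joinFun g₁ g₂) (some (toLex (Sum.inr (wb : WithBot P₂))))
              ≤ (joinFun g₁ g₂) (some qbot)
          rw [joinFun_inr, joinFun_bot]; exact h₂.1 wb
      · induction' b with wb
        · exact absurd hab (by simp)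
        · show (joinFun g₁ g₂) (some (toLex (Sum.inr (wb : WithBot P₂))))
              ≤ (joinFun g₁ g₂) (some (toLex (Sum.inr (wa : WithBot P₂))))
          rw [joinFun_inr, joinFun_inr]
          exact h₂.2 wa wb (WithBot.coe_le_coe.mp hab)
    | sep a b =>
      show (joinFun g₁ g₂) (some (toLex (Sum.inr b))) ≤ (joinFun g₁ g₂) (some (toLex (Sum.inl a)))
      rw [joinFun_inl]
      induction' b with wb
      · rw [joinFun_bot]; omega
      · rw [joinFun_inr]
        have := h₂.1 wb; omega


noncomputable def coneEquiv :
    hibiCone (P₁ ⊕ₗ WithBot P₂) ≃+ hibiCone P₁ × hibiCone P₂ where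
  toFun f := (⟨splitFun₁ f.1, splitFun₁_mem _ f.2⟩, ⟨splitFun₂ f.1, splitFun₂_mem _ f.2⟩)
  invFun g := ⟨joinFun g.1.1 g.2.1, joinFun_mem _ _ g.1.2 g.2.2⟩
  left_inv f := by
    obtain ⟨f, hf⟩ := f
    apply Subtype.ext
    show joinFun (splitFun₁ f) (splitFun₂ f) = f
    ext o
    cases o with
    | none =>
      rw [joinFun_none, splitFun₁_none, splitFun₂_none]
      have h1 : f (some qbot) ≤ f none := hf.1 qbot
      omega
    | some q =>
      induction' hq : ofLex q with v b
      · rw [show q = toLex (Sum.inl v) by rw [← hq]; rfl]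
        rw [joinFun_inl, splitFun₁_some, splitFun₂_none]
        have h1 := bot_le_inl f hf v
        omega
      · rw [show q = toLex (Sum.inr b) by rw [← hq]; rfl]
        induction' b with w
        · rw [joinFun_bot, splitFun₂_none]
        · rw [joinFun_inr, splitFun₂_some]
  right_inv g := by
    obtain ⟨⟨g₁, h₁⟩, ⟨g₂, h₂⟩⟩ := g
    refine Prod.ext (Subtype.ext ?_) (Subtype.ext ?_)
    · show splitFun₁ (joinFun g₁ g₂) = g₁
      ext o
      cases o with
      | none => rw [splitFun₁_none, joinFun_none, joinFun_bot]; omega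
      | some v => rw [splitFun₁_some, joinFun_inl, joinFun_bot]; omega
    · show splitFun₂ (joinFun g₁ g₂) = g₂
      ext o
      cases o with
      | none => rw [splitFun₂_none, joinFun_bot]
      | some w => rw [splitFun₂_some, joinFun_inr]
  map_add' f g := by
    obtain ⟨f, hf⟩ := f
    obtain ⟨g, hg⟩ := g
    refine Prod.ext (Subtype.ext ?_) (Subtype.ext ?_)
    · show splitFun₁ (f + g) = splitFun₁ f + splitFun₁ g
      ext o
      have h1 := bot_le_inl f hf
      have h2 := bot_le_inl g hg
      have h3 : f (some qbot) ≤ f none := hf.1 qbot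
      have h4 : g (some qbot) ≤ g none := hg.1 qbot
      cases o with
      | none =>
        rw [Finsupp.add_apply, splitFun₁_none, splitFun₁_none, splitFun₁_none,
          Finsupp.add_apply, Finsupp.add_apply]
        omega
      | some v =>
        rw [Finsupp.add_apply, splitFun₁_some, splitFun₁_some, splitFun₁_some,
          Finsupp.add_apply, Finsupp.add_apply]
        have := h1 v; have := h2 v
        omega
    · show splitFun₂ (f + g) = splitFun₂ f + splitFun₂ g
      ext o
      cases o with
      | none =>
        rw [Finsupp.add_apply, splitFun₂_none, splitFun₂_none, splitFun₂_none, Finsupp.add_apply]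
      | some w =>
        rw [Finsupp.add_apply, splitFun₂_some, splitFun₂_some, splitFun₂_some, Finsupp.add_apply]

end ConeSplit

set_option synthInstance.maxHeartbeats 1000000 in
set_option maxHeartbeats 1000000 in
/-- For the ordinal sum `P₁ ⊕ \bar{P₂}` (where `\bar{P₂}` is `P₂` with a minimum adjoined),
there is a `K`-algebra isomorphism `K[P₁ ⊕ \bar{P₂}] ≅ K[P₁] ⊗_K K[P₂]`. -/
theorem hibiRing_ordinal_sum_iso (K : Type*) [Field K]
    (P₁ P₂ : Type*) [PartialOrder P₁] [Fintype P₁] [PartialOrder P₂] [Fintype P₂] :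
    Nonempty
      ((HibiRing K (P₁ ⊕ₗ WithBot P₂)) ≃ₐ[K]
        TensorProduct K (HibiRing K P₁) (HibiRing K P₂)) := by
  exact ⟨((hibiEquiv K (P₁ ⊕ₗ WithBot P₂)).symm.trans
    (AddMonoidAlgebra.domCongr K K coneEquiv)).trans
    ((amaProdEquiv K (hibiCone P₁) (hibiCone P₂)).trans
      (Algebra.TensorProduct.congr (hibiEquiv K P₁) (hibiEquiv K P₂)))⟩
end
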